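/- arXiv:1402.5892 — 3 statements merged into one kernel-verified Lean document; each statement's English description precedes it below -/
import Mathlib

section
/- Let H be a real inner product space and let g, h : [0,1] → H be given by g(s) = (θ − s)·r (with θ ∈ [0,1], r ∈ H fixed) and h(s) = h₀ constant. Then (∫₀¹ ‖g(s) + h(s)‖² ds)^{1/2} ≥ √(5/14)·(1 − √3/2)·(∫₀¹ ‖g(s)‖² ds + ∫₀¹ ‖h(s)‖² ds)^{1/2}. -/
/-!
Expanding the square, `∫‖g + h‖² = ∫‖g‖² + 2∫⟪g, h⟫ + ∫‖h‖²`. For `g(s) = (θ - s) • r` and a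
constant `h`, the cross term is `(θ - 1/2)⟪r, h₀⟫` while `∫‖g‖² = ((θ - 1/2)² + 1/12)‖r‖²`, so for
`θ ∈ [0, 1]` the cosine of the angle between `g` and `h` in `L²(0, 1)` is at most `√3/2`.
A strengthened Cauchy–Schwarz inequality then gives `∫‖g + h‖² ≥ (1 - √3/2)(∫‖g‖² + ∫‖h‖²)`,
which is stronger than the claim since `5/14 · (1 - √3/2)² ≤ 1 - √3/2`.
-/

open intervalIntegral

theorem one_sub_mul_add_le_add_two_mul_add {x y z γ : ℝ} (hx : 0 ≤ x) (hy : 0 ≤ y)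
    (hγ : 0 ≤ γ) (hz : z ^ 2 ≤ γ ^ 2 * x * y) :
    (1 - γ) * (x + y) ≤ x + 2 * z + y := by
  have h : (2 * z) ^ 2 ≤ (γ * (x + y)) ^ 2 := by
    nlinarith [mul_nonneg (sq_nonneg γ) (sq_nonneg (x - y))]
  have := (abs_le_of_sq_le_sq' h (by positivity)).1
  linarith

theorem integral_sub_sq_unitInterval (θ : ℝ) :
    ∫ s in (0 : ℝ)..1, (θ - s) ^ 2 = θ ^ 2 - θ + 1 / 3 := by
  rw [integral_comp_sub_left (fun x => x ^ 2), integral_pow]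
  ring

theorem integral_sub_unitInterval (θ : ℝ) :
    ∫ s in (0 : ℝ)..1, (θ - s) = θ - 1 / 2 := by
  rw [integral_comp_sub_left (fun x => x), integral_id]
  ring

section InnerProductSpace

variable {H : Type*} [NormedAddCommGroup H] [InnerProductSpace ℝ H]

theorem integral_norm_add_sq {g h : ℝ → H} (hg : Continuous g) (hh : Continuous h) (a b : ℝ) :
    ∫ s in a..b, ‖g s + h s‖ ^ 2 =
      (∫ s in a..b, ‖g s‖ ^ 2) + 2 * (∫ s in a..b, inner ℝ (g s) (h s)) +
        ∫ s in a..b, ‖h s‖ ^ 2 := by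
  have hi : ∀ f : ℝ → ℝ, Continuous f → IntervalIntegrable f MeasureTheory.volume a b :=
    fun f hf => hf.intervalIntegrable a b
  simp_rw [norm_add_sq_real]
  rw [integral_add (hi _ (by fun_prop)) (hi _ (by fun_prop)),
    integral_add (hi _ (by fun_prop)) (hi _ (by fun_prop)), integral_const_mul]

theorem integral_norm_sub_smul_sq (θ : ℝ) (r : H) :
    ∫ s in (0 : ℝ)..1, ‖(θ - s) • r‖ ^ 2 = (θ ^ 2 - θ + 1 / 3) * ‖r‖ ^ 2 := by
  simp_rw [norm_smul, mul_pow, Real.norm_eq_abs, sq_abs]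
  rw [integral_mul_const, integral_sub_sq_unitInterval]

theorem integral_inner_sub_smul (θ : ℝ) (r h₀ : H) :
    ∫ s in (0 : ℝ)..1, inner ℝ ((θ - s) • r) h₀ = (θ - 1 / 2) * inner ℝ r h₀ := by
  simp_rw [real_inner_smul_left]
  rw [integral_mul_const, integral_sub_unitInterval]

theorem sq_integral_inner_sub_smul_le {θ : ℝ} (hθ : θ ∈ Set.Icc (0 : ℝ) 1) (r h₀ : H) :
    (∫ s in (0 : ℝ)..1, inner ℝ ((θ - s) • r) h₀) ^ 2 ≤
      3 / 4 * (∫ s in (0 : ℝ)..1, ‖(θ - s) • r‖ ^ 2) * ∫ _ in (0 : ℝ)..1, ‖h₀‖ ^ 2 := by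
  rw [integral_inner_sub_smul, integral_norm_sub_smul_sq, integral_const, sub_zero, one_smul]
  have hcs : inner ℝ r h₀ ^ 2 ≤ ‖r‖ ^ 2 * ‖h₀‖ ^ 2 := by
    rw [← mul_pow]
    exact sq_le_sq' (abs_le.mp (abs_real_inner_le_norm r h₀)).1
      (abs_le.mp (abs_real_inner_le_norm r h₀)).2
  have hθ' : (θ - 1 / 2) ^ 2 ≤ 3 / 4 * (θ ^ 2 - θ + 1 / 3) := by nlinarith [hθ.1, hθ.2]
  calc ((θ - 1 / 2) * inner ℝ r h₀) ^ 2
      = (θ - 1 / 2) ^ 2 * inner ℝ r h₀ ^ 2 := mul_pow _ _ _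
    _ ≤ 3 / 4 * (θ ^ 2 - θ + 1 / 3) * (‖r‖ ^ 2 * ‖h₀‖ ^ 2) :=
        mul_le_mul hθ' hcs (sq_nonneg _) (by nlinarith [sq_nonneg (θ - 1 / 2)])
    _ = _ := by ring

end InnerProductSpace

theorem decomposition_of_residual_lower_bound
    {H : Type*} [NormedAddCommGroup H] [InnerProductSpace ℝ H]
    (θ : ℝ) (hθ : θ ∈ Set.Icc (0 : ℝ) 1) (r h₀ : H) :
    Real.sqrt (5 / 14) * (1 - Real.sqrt 3 / 2) *
        Real.sqrt ((∫ s in (0 : ℝ)..1, ‖(θ - s) • r‖ ^ 2) +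
          ∫ s in (0 : ℝ)..1, ‖h₀‖ ^ 2) ≤
      Real.sqrt (∫ s in (0 : ℝ)..1, ‖(θ - s) • r + h₀‖ ^ 2) := by
  set γ := Real.sqrt 3 / 2
  set X := ∫ s in (0 : ℝ)..1, ‖(θ - s) • r‖ ^ 2
  set Y := ∫ s in (0 : ℝ)..1, ‖h₀‖ ^ 2
  have hX : 0 ≤ X := integral_nonneg zero_le_one fun _ _ => sq_nonneg _
  have hY : 0 ≤ Y := integral_nonneg zero_le_one fun _ _ => sq_nonneg _
  have hγ_sq : γ ^ 2 = 3 / 4 := by rw [div_pow, Real.sq_sqrt (by norm_num)]; norm_num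
  have hγ_le : γ ≤ 1 := by nlinarith [Real.sqrt_nonneg 3]
  have hlower : (1 - γ) * (X + Y) ≤ ∫ s in (0 : ℝ)..1, ‖(θ - s) • r + h₀‖ ^ 2 := by
    rw [integral_norm_add_sq (g := fun s => (θ - s) • r) (by fun_prop) continuous_const]
    exact one_sub_mul_add_le_add_two_mul_add hX hY (by positivity)
      (hγ_sq ▸ sq_integral_inner_sub_smul_le hθ r h₀)
  calc Real.sqrt (5 / 14) * (1 - γ) * Real.sqrt (X + Y)
      = Real.sqrt (5 / 14 * (1 - γ) ^ 2 * (X + Y)) := by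
        rw [Real.sqrt_mul (by positivity), Real.sqrt_mul (by norm_num),
          Real.sqrt_sq (by linarith)]
    _ ≤ Real.sqrt ((1 - γ) * (X + Y)) := by
        gcongr
        nlinarith [mul_nonneg (sub_nonneg.mpr hγ_le) (by positivity : (0 : ℝ) ≤ γ)]
    _ ≤ _ := Real.sqrt_le_sqrt hlower
end

section
/- Let V be a real Hilbert space with norm ‖·‖ and B a bilinear form on V satisfying B(v,v) ≥ ‖v‖² for all v. Let ℓ be a bounded linear functional, u ∈ V the solution of B(u,·) = ℓ, and suppose moreover B(v,w) ≤ C(‖v‖ + |v|_*)‖w‖ with C ≥ 1 and a seminorm |·|_*, together with the inf-sup bound inf_v sup_w B(v,w)/((‖v‖+|v|_*)‖w‖) ≥ 1/(2+C). Then c_♯ ‖ℓ‖_* ≤ ‖u‖ + |u|_* ≤ c^♯ ‖ℓ‖_* with c_♯ = 1/C and c^♯ = 2 + C, where ‖ℓ‖_* = sup_{v≠0} ℓ(v)/‖v‖. -/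
/-!
The lower bound is continuity: `ℓ v = B(u, v) ≤ C (‖u‖ + |u|_*) ‖v‖`. For the upper bound,
the inner supremum of the inf-sup quotient at `v = u` is exactly `‖ℓ‖_* / (‖u‖ + |u|_*)`, since
`B(u, ·) = ℓ`, so the inf-sup bound reads `1 / (2 + C) ≤ ‖ℓ‖_* / (‖u‖ + |u|_*)`.
-/

/-- The dual norm of a functional: `sup_{v ≠ 0} ℓ v / ‖v‖`. -/
noncomputable def dualNorm {V : Type*} [NormedAddCommGroup V] (L : V → ℝ) : ℝ :=
  ⨆ v : {v : V // v ≠ 0}, L v.1 / ‖v.1‖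

section DualNorm

variable {V : Type*} [NormedAddCommGroup V]

theorem dualNorm_le {L : V → ℝ} {M : ℝ} (hM : 0 ≤ M) (h : ∀ v, L v ≤ M * ‖v‖) :
    dualNorm L ≤ M :=
  Real.iSup_le (fun v => (div_le_iff₀ (norm_pos_iff.2 v.2)).2 (h v.1)) hM

theorem dualNorm_nonneg [Module ℝ V] (L : V →ₗ[ℝ] ℝ) : 0 ≤ dualNorm L := by
  rcases isEmpty_or_nonempty {v : V // v ≠ 0} with hV | ⟨v, hv⟩
  · exact (Real.iSup_of_isEmpty _).ge
  -- one of `L v` and `L (-v)` is nonnegative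
  refine Real.iSup_nonneg' ?_
  rcases le_total 0 (L v) with hLv | hLv
  · exact ⟨⟨v, hv⟩, div_nonneg hLv (norm_nonneg v)⟩
  · refine ⟨⟨-v, neg_ne_zero.2 hv⟩, div_nonneg ?_ (norm_nonneg _)⟩
    simpa using hLv

/-- Junk values are harmless here: for `c = 0` both sides vanish, and an unbounded supremum is
`0` on both sides. -/
theorem iSup_div_mul_norm_eq (L : V → ℝ) {c : ℝ} (hc : 0 ≤ c) :
    ⨆ w : {w : V // w ≠ 0}, L w.1 / (c * ‖w.1‖) = dualNorm L / c := by
  rw [dualNorm, div_eq_mul_inv, Real.iSup_mul_of_nonneg (inv_nonneg.2 hc)]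
  simp only [mul_comm c, div_eq_mul_inv, mul_inv, mul_assoc]

theorem mul_le_dualNorm_of_le_iInf_iSup [Module ℝ V] (B : V →ₗ[ℝ] V →ₗ[ℝ] ℝ) {N : V → ℝ}
    (hN : ∀ v, 0 ≤ N v) {γ : ℝ}
    (hγ : γ ≤ ⨅ v : {v : V // v ≠ 0}, ⨆ w : {w : V // w ≠ 0}, B v.1 w.1 / (N v.1 * ‖w.1‖))
    {u : V} (hu : u ≠ 0) : γ * N u ≤ dualNorm (B u) := by
  simp only [iSup_div_mul_norm_eq _ (hN _)] at hγ
  have hbdd : BddBelow (Set.range fun v : {v : V // v ≠ 0} => dualNorm (B v.1) / N v.1) :=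
    ⟨0, by rintro _ ⟨v, rfl⟩; exact div_nonneg (dualNorm_nonneg _) (hN _)⟩
  have hγu : γ ≤ dualNorm (B u) / N u := hγ.trans (ciInf_le hbdd ⟨u, hu⟩)
  rcases (hN u).eq_or_lt with hNu | hNu
  · rw [← hNu, mul_zero]
    exact dualNorm_nonneg _
  · exact (le_div_iff₀ hNu).1 hγu

end DualNorm

theorem robust_stability_estimate_general
    {V : Type*} [NormedAddCommGroup V] [InnerProductSpace ℝ V]
    (B : V →ₗ[ℝ] V →ₗ[ℝ] ℝ)
    (p : Seminorm ℝ V)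
    (C : ℝ) (hC : 1 ≤ C)
    (hcont : ∀ v w : V, B v w ≤ C * (‖v‖ + p v) * ‖w‖)
    (hinfsup : (1 : ℝ) / (2 + C) ≤
      ⨅ v : {v : V // v ≠ 0}, ⨆ w : {w : V // w ≠ 0},
        B v.1 w.1 / ((‖v.1‖ + p v.1) * ‖w.1‖))
    (ℓ : V →L[ℝ] ℝ) (u : V) (hu : ∀ v : V, B u v = ℓ v) :
    (1 / C) * dualNorm (fun v => ℓ v) ≤ ‖u‖ + p u ∧
      ‖u‖ + p u ≤ (2 + C) * dualNorm (fun v => ℓ v) := by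
  have hℓ : (fun v => ℓ v) = ⇑(B u) := funext fun v => (hu v).symm
  have hC0 : 0 < C := by linarith
  rw [hℓ]
  constructor
  · have hbound : dualNorm (B u) ≤ C * (‖u‖ + p u) :=
      dualNorm_le (by positivity) (hcont u)
    rw [one_div_mul_eq_div, div_le_iff₀ hC0]
    linarith
  · rcases eq_or_ne u 0 with rfl | hu0
    · rw [norm_zero, map_zero, add_zero]
      exact mul_nonneg (by linarith) (dualNorm_nonneg _)
    · have hstab : 1 / (2 + C) * (‖u‖ + p u) ≤ dualNorm (B u) :=
        mul_le_dualNorm_of_le_iInf_iSup B (N := fun v => ‖v‖ + p v)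
          (fun v => by positivity) hinfsup hu0
      rw [one_div_mul_eq_div, div_le_iff₀ (by linarith)] at hstab
      linarith

theorem robust_stability_estimate
    {V : Type*} [NormedAddCommGroup V] [InnerProductSpace ℝ V] [CompleteSpace V]
    [Nontrivial V]
    (B : V →ₗ[ℝ] V →ₗ[ℝ] ℝ)
    (p : Seminorm ℝ V)
    (C : ℝ) (hC : 1 ≤ C)
    (hcoer : ∀ v : V, ‖v‖ ^ 2 ≤ B v v)
    (hcont : ∀ v w : V, B v w ≤ C * (‖v‖ + p v) * ‖w‖)
    (hinfsup : (1 : ℝ) / (2 + C) ≤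
      ⨅ v : {v : V // v ≠ 0}, ⨆ w : {w : V // w ≠ 0},
        B v.1 w.1 / ((‖v.1‖ + p v.1) * ‖w.1‖))
    (ℓ : V →L[ℝ] ℝ) (u : V) (hu : ∀ v : V, B u v = ℓ v) :
    (1 / C) * dualNorm (fun v => ℓ v) ≤ ‖u‖ + p u ∧
      ‖u‖ + p u ≤ (2 + C) * dualNorm (fun v => ℓ v) :=
  robust_stability_estimate_general B p C hC hcont hinfsup ℓ u hu
end

section
/- Let f : [0,1] → ℝ be f(s) = (θ − s)r + c with fixed θ ∈ [0,1] and r, c ∈ ℝ. Then ∫₀¹ f(s)² ds = (θ² − θ + 1/3) r² + (2θ − 1) r c + c², and this quadratic form in (r,c) is bounded below by λ(r² + c²) where λ > 0 is the smallest eigenvalue of the matrix [[θ²−θ+1/3, θ−1/2],[θ−1/2, 1]]; moreover λ ≥ 5/14·(1 − √3/2)² for all θ ∈ [0,1]. -/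
/-!
Expanding the square writes the integral as the quadratic form of the Gram matrix
`M = !![θ² - θ + 1/3, θ - 1/2; θ - 1/2, 1]` of `s ↦ θ - s` and `1` on `[0, 1]`, and the smaller
eigenvalue of `M` bounds that form below. The two eigenvalues multiply to `det M = 1/12` and the
larger one is at most `tr M ≤ 4/3`, so the smaller one is at least `1/16 > 5/14 (1 - √3/2)²`.
-/

theorem integral_sq_sub_mul_add (θ r c : ℝ) :
    (∫ s in (0 : ℝ)..1, ((θ - s) * r + c) ^ 2) =
      (θ ^ 2 - θ + 1 / 3) * r ^ 2 + (2 * θ - 1) * r * c + c ^ 2 := by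
  have hexpand : ∀ s : ℝ, ((θ - s) * r + c) ^ 2 =
      r ^ 2 * s ^ 2 - 2 * r * (θ * r + c) * s + (θ * r + c) ^ 2 := fun s => by ring
  have hii {f : ℝ → ℝ} (hf : Continuous f) : IntervalIntegrable f MeasureTheory.volume 0 1 :=
    hf.intervalIntegrable 0 1
  simp only [hexpand]
  rw [intervalIntegral.integral_add ((hii (by fun_prop)).sub (hii (by fun_prop)))
      (hii (by fun_prop)),
    intervalIntegral.integral_sub (hii (by fun_prop)) (hii (by fun_prop)),
    intervalIntegral.integral_const_mul, intervalIntegral.integral_const_mul,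
    integral_pow, integral_id, intervalIntegral.integral_const, smul_eq_mul]
  ring

theorem quadratic_form_nonneg {p q b : ℝ} (hp : 0 ≤ p) (hq : 0 ≤ q) (h : b ^ 2 ≤ p * q)
    (x y : ℝ) : 0 ≤ p * x ^ 2 + 2 * b * x * y + q * y ^ 2 := by
  rcases hp.eq_or_lt with rfl | hp
  · obtain rfl : b = 0 := by nlinarith
    nlinarith [sq_nonneg y]
  · refine (mul_nonneg_iff_of_pos_left hp).1 ?_
    have hcomplete : p * (p * x ^ 2 + 2 * b * x * y + q * y ^ 2) =
        (p * x + b * y) ^ 2 + (p * q - b ^ 2) * y ^ 2 := by ring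
    rw [hcomplete]
    nlinarith [sq_nonneg (p * x + b * y), sq_nonneg y]

noncomputable section

/-- The smaller root of the characteristic polynomial of the symmetric matrix `!![a, b; b, d]`. -/
def symmMinEigenvalue (a b d : ℝ) : ℝ :=
  ((a + d) - Real.sqrt ((a + d) ^ 2 - 4 * (a * d - b ^ 2))) / 2

end

section

variable (a b d : ℝ)

theorem sq_sqrt_charpoly_discrim :
    Real.sqrt ((a + d) ^ 2 - 4 * (a * d - b ^ 2)) ^ 2 = (a - d) ^ 2 + 4 * b ^ 2 := by
  rw [Real.sq_sqrt] <;> nlinarith [sq_nonneg (a - d), sq_nonneg b]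

theorem symmMinEigenvalue_mul_le (x y : ℝ) :
    symmMinEigenvalue a b d * (x ^ 2 + y ^ 2) ≤ a * x ^ 2 + 2 * b * x * y + d * y ^ 2 := by
  have hs := sq_sqrt_charpoly_discrim a b d
  have hads : |a - d| ≤ Real.sqrt ((a + d) ^ 2 - 4 * (a * d - b ^ 2)) :=
    Real.abs_le_sqrt (by nlinarith [sq_nonneg b])
  set s := Real.sqrt ((a + d) ^ 2 - 4 * (a * d - b ^ 2))
  -- `M - λ I` has diagonal `(a - d + s) / 2`, `(d - a + s) / 2`, both nonnegative, and determinant 0.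
  have hshift := quadratic_form_nonneg (p := (a - d + s) / 2) (q := (d - a + s) / 2) (b := b)
    (by linarith [neg_abs_le (a - d)]) (by linarith [le_abs_self (a - d)]) (by nlinarith) x y
  unfold symmMinEigenvalue
  nlinarith

theorem div_le_symmMinEigenvalue (hdet : 0 ≤ a * d - b ^ 2) (htr : 0 < a + d) :
    (a * d - b ^ 2) / (a + d) ≤ symmMinEigenvalue a b d := by
  have hs := sq_sqrt_charpoly_discrim a b d
  have hs0 := Real.sqrt_nonneg ((a + d) ^ 2 - 4 * (a * d - b ^ 2))
  have hstr : Real.sqrt ((a + d) ^ 2 - 4 * (a * d - b ^ 2)) ≤ a + d := by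
    rw [Real.sqrt_le_left htr.le]; linarith
  set s := Real.sqrt ((a + d) ^ 2 - 4 * (a * d - b ^ 2))
  unfold symmMinEigenvalue
  rw [div_le_iff₀ htr]
  nlinarith

end

theorem five_fourteenths_mul_one_sub_sqrt_three_div_two_sq_le :
    5 / 14 * (1 - Real.sqrt 3 / 2) ^ 2 ≤ 1 / 16 := by
  have h3 : 3 / 2 ≤ Real.sqrt 3 := by rw [Real.le_sqrt] <;> norm_num
  have h3' : Real.sqrt 3 ≤ 2 := by rw [Real.sqrt_le_left] <;> norm_num
  nlinarith

theorem affine_plus_constant_L2_identity_and_lower_bound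
    (θ r c : ℝ) (hθ : θ ∈ Set.Icc (0 : ℝ) 1) :
    (∫ s in (0 : ℝ)..1, ((θ - s) * r + c) ^ 2) =
        (θ ^ 2 - θ + 1 / 3) * r ^ 2 + (2 * θ - 1) * r * c + c ^ 2 ∧
      ∀ lam : ℝ,
        lam = ((θ ^ 2 - θ + 1 / 3 + 1) -
            Real.sqrt ((θ ^ 2 - θ + 1 / 3 + 1) ^ 2 -
              4 * ((θ ^ 2 - θ + 1 / 3) * 1 - (θ - 1 / 2) ^ 2))) / 2 →
          0 < lam ∧
          lam * (r ^ 2 + c ^ 2) ≤ (∫ s in (0 : ℝ)..1, ((θ - s) * r + c) ^ 2) ∧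
          5 / 14 * (1 - Real.sqrt 3 / 2) ^ 2 ≤ lam := by
  obtain ⟨hθ0, hθ1⟩ := hθ
  refine ⟨integral_sq_sub_mul_add θ r c, fun lam hlam => ?_⟩
  replace hlam : lam = symmMinEigenvalue (θ ^ 2 - θ + 1 / 3) (θ - 1 / 2) 1 := hlam
  have hdet : (θ ^ 2 - θ + 1 / 3) * 1 - (θ - 1 / 2) ^ 2 = 1 / 12 := by ring
  have htr : 0 < θ ^ 2 - θ + 1 / 3 + 1 := by nlinarith [sq_nonneg (θ - 1 / 2)]
  have hlam_ge : 1 / 16 ≤ lam :=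
    calc 1 / 16 ≤ ((θ ^ 2 - θ + 1 / 3) * 1 - (θ - 1 / 2) ^ 2) / (θ ^ 2 - θ + 1 / 3 + 1) := by
          rw [hdet, le_div_iff₀ htr]; nlinarith
      _ ≤ lam := hlam ▸ div_le_symmMinEigenvalue _ _ _ (by linarith) htr
  refine ⟨by linarith, ?_, five_fourteenths_mul_one_sub_sqrt_three_div_two_sq_le.trans hlam_ge⟩
  calc lam * (r ^ 2 + c ^ 2)
      ≤ (θ ^ 2 - θ + 1 / 3) * r ^ 2 + 2 * (θ - 1 / 2) * r * c + 1 * c ^ 2 :=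
        hlam ▸ symmMinEigenvalue_mul_le _ _ _ r c
    _ = _ := by rw [integral_sq_sub_mul_add]; ring
end
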